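/- For N = 2, the classical and no-signalling optimal winning probabilities of the GYNI game coincide for every prior distribution q on {0,1}²: ω_ns = ω_c = max_x (q(x) + q(x̄)). -/

import Mathlib

open scoped BigOperators

/-- Bitwise negation of a bit string. -/
def negStr {N : ℕ} (x : Fin N → Bool) : Fin N → Bool := fun i => !(x i)

/-- A no-signalling box for `N` parties with binary inputs and outputs. -/
structure NSBox (N : ℕ) where
  P : (Fin N → Bool) → (Fin N → Bool) → ℝ
  nonneg : ∀ a x, 0 ≤ P a x
  normalized : ∀ x, ∑ a, P a x = 1
  noSignalling : ∀ (S : Finset (Fin N)) (x x' : Fin N → Bool),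
    (∀ i ∈ S, x i = x' i) → ∀ a : Fin N → Bool,
      ∑ a' ∈ Finset.univ.filter (fun a' => ∀ i ∈ S, a' i = a i), P a' x =
      ∑ a' ∈ Finset.univ.filter (fun a' => ∀ i ∈ S, a' i = a i), P a' x'

/-- GYNI winning probability of a no-signalling box for prior `q`. -/
noncomputable def gyniWin {N : ℕ} [NeZero N] (q : (Fin N → Bool) → ℝ) (B : NSBox N) : ℝ :=
  ∑ x, q x * B.P (fun i => x (i + 1)) x

/-- The classical GYNI bound `ω_c = max_x (q(x) + q(x̄))`. -/
noncomputable def omegaC {N : ℕ} (q : (Fin N → Bool) → ℝ) : ℝ :=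
  Finset.univ.sup' Finset.univ_nonempty (fun x => q x + q (negStr x))

/-- A deterministic local strategy wins the GYNI game on input string `x`. -/
def winsOn {N : ℕ} [NeZero N] (f : Fin N → Bool → Bool) (x : Fin N → Bool) : Bool :=
  decide (∀ i, f i (x i) = x (i + 1))

/-- Winning probability of a deterministic local strategy. -/
noncomputable def classWin {N : ℕ} [NeZero N] (q : (Fin N → Bool) → ℝ)
    (f : Fin N → Bool → Bool) : ℝ :=
  ∑ x, q x * (if winsOn f x then (1:ℝ) else 0)

/-! Party `i` wins on input `x` only by outputting `x (i + 1)`. If `x` and `y` agree at `i` but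
differ at `i + 1`, the two wins need different outputs of party `i`, whose marginal does not see
the other inputs; so the winning probabilities on `x` and `y` add up to at most `1`. For two
parties this links each of `00`, `11` to each of `01`, `10`, which bounds the winning
probability by `max (q 00 + q 11) (q 01 + q 10) = ω_c`. The deterministic strategy winning on a
maximising pair `{w, w̄}` attains this bound, and deterministic strategies are no-signalling. -/

namespace NSBox

variable {N : ℕ} (B : NSBox N)

def marginal (i : Fin N) (b : Bool) (x : Fin N → Bool) : ℝ :=
  ∑ a ∈ Finset.univ.filter (fun a : Fin N → Bool => a i = b), B.P a x

theorem marginal_eq_of_eq {i : Fin N} {x y : Fin N → Bool} (h : x i = y i) (b : Bool) :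
    B.marginal i b x = B.marginal i b y := by
  simpa [marginal] using
    B.noSignalling {i} x y (by simpa using h) (fun _ => b)

theorem marginal_add_marginal_not (i : Fin N) (b : Bool) (x : Fin N → Bool) :
    B.marginal i b x + B.marginal i (!b) x = 1 := by
  rw [← B.normalized x, marginal, marginal, ← Finset.sum_filter_add_sum_filter_not Finset.univ
    (fun a : Fin N → Bool => a i = b)]
  simp only [Bool.eq_not_iff, ne_eq]

theorem P_le_marginal (a x : Fin N → Bool) (i : Fin N) : B.P a x ≤ B.marginal i (a i) x :=
  Finset.single_le_sum (fun a _ => B.nonneg a x) (by simp)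

def winProb [NeZero N] (x : Fin N → Bool) : ℝ := B.P (fun j => x (j + 1)) x

theorem winProb_add_winProb_le_one [NeZero N] {x y : Fin N → Bool} {i : Fin N}
    (hi : x i = y i) (hne : x (i + 1) ≠ y (i + 1)) :
    B.winProb x + B.winProb y ≤ 1 := by
  have hy : y (i + 1) = !x (i + 1) := by cases h : x (i + 1) <;> simp_all
  calc B.winProb x + B.winProb y
      ≤ B.marginal i (x (i + 1)) x + B.marginal i (y (i + 1)) y :=
        add_le_add (B.P_le_marginal _ x i) (B.P_le_marginal _ y i)
    _ = 1 := by rw [B.marginal_eq_of_eq hi, hy, marginal_add_marginal_not]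

def ofStrategy (f : Fin N → Bool → Bool) : NSBox N where
  P a x := if a = fun i => f i (x i) then 1 else 0
  nonneg a x := by split <;> norm_num
  normalized x := by simp
  noSignalling S x x' h a := by
    simp only [Finset.sum_ite_eq', Finset.mem_filter, Finset.mem_univ, true_and]
    exact if_congr (forall₂_congr fun i hi => by rw [h i hi]) rfl rfl

end NSBox

theorem classWin_eq_gyniWin_ofStrategy {N : ℕ} [NeZero N] (q : (Fin N → Bool) → ℝ)
    (f : Fin N → Bool → Bool) : classWin q f = gyniWin q (NSBox.ofStrategy f) := by
  refine Finset.sum_congr rfl fun x _ => congrArg (q x * ·) (if_congr ?_ rfl rfl)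
  simp [winsOn, funext_iff, eq_comm]

theorem add_le_classWin {N : ℕ} [NeZero N] {q : (Fin N → Bool) → ℝ} (hq : ∀ x, 0 ≤ q x)
    {f : Fin N → Bool → Bool} {x y : Fin N → Bool} (hxy : x ≠ y)
    (hx : winsOn f x) (hy : winsOn f y) : q x + q y ≤ classWin q f := by
  calc q x + q y = ∑ z ∈ {x, y}, q z * (if winsOn f z then (1 : ℝ) else 0) := by
        simp [Finset.sum_pair hxy, hx, hy]
    _ ≤ classWin q f :=
        Finset.sum_le_sum_of_subset_of_nonneg (Finset.subset_univ _)
          fun z _ _ => mul_nonneg (hq z) (by split <;> norm_num)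

theorem ne_negStr {N : ℕ} [NeZero N] (x : Fin N → Bool) : x ≠ negStr x := fun h => by
  simpa [negStr] using congrFun h 0

def pairStrategy {N : ℕ} [NeZero N] (w : Fin N → Bool) : Fin N → Bool → Bool :=
  fun i b => xor b (xor (w i) (w (i + 1)))

theorem winsOn_pairStrategy {N : ℕ} [NeZero N] (w : Fin N → Bool) :
    winsOn (pairStrategy w) w ∧ winsOn (pairStrategy w) (negStr w) := by
  constructor <;> simp [winsOn, pairStrategy, negStr]

theorem mul_add_mul_add_mul_add_mul_le_max {q₁ q₂ q₃ q₄ p₁ p₂ p₃ p₄ : ℝ}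
    (hq₁ : 0 ≤ q₁) (hq₂ : 0 ≤ q₂) (hq₃ : 0 ≤ q₃) (hq₄ : 0 ≤ q₄)
    (hp₁ : 0 ≤ p₁) (hp₂ : 0 ≤ p₂)
    (h₁₂ : p₁ + p₂ ≤ 1) (h₁₃ : p₁ + p₃ ≤ 1) (h₄₂ : p₄ + p₂ ≤ 1) (h₄₃ : p₄ + p₃ ≤ 1) :
    q₁ * p₁ + q₂ * p₂ + q₃ * p₃ + q₄ * p₄ ≤ max (q₁ + q₄) (q₂ + q₃) := by
  set m := max p₁ p₄
  have hm₀ : 0 ≤ m := le_max_of_le_left hp₁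
  have hm₂ : p₂ ≤ 1 - m := le_sub_comm.mp (max_le (by linarith) (by linarith))
  have hm₃ : p₃ ≤ 1 - m := le_sub_comm.mp (max_le (by linarith) (by linarith))
  set M := max (q₁ + q₄) (q₂ + q₃)
  calc q₁ * p₁ + q₂ * p₂ + q₃ * p₃ + q₄ * p₄
      ≤ (q₁ + q₄) * m + (q₂ + q₃) * (1 - m) := by
        have := mul_le_mul_of_nonneg_left (le_max_left p₁ p₄) hq₁
        have := mul_le_mul_of_nonneg_left (le_max_right p₁ p₄) hq₄
        have := mul_le_mul_of_nonneg_left hm₂ hq₂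
        have := mul_le_mul_of_nonneg_left hm₃ hq₃
        linarith
    _ ≤ M * m + M * (1 - m) := by
        gcongr
        · exact le_max_left _ _
        · linarith
        · exact le_max_right _ _
    _ = M := by ring

theorem sum_fin_two_bool {M : Type*} [AddCommMonoid M] (g : (Fin 2 → Bool) → M) :
    ∑ x, g x = g ![false, false] + g ![false, true] + g ![true, false] + g ![true, true] := by
  have : (Finset.univ : Finset (Fin 2 → Bool)) =
      {![false, false], ![false, true], ![true, false], ![true, true]} := by decide
  rw [this, Finset.sum_insert (by decide), Finset.sum_insert (by decide),
    Finset.sum_pair (by decide)]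
  simp only [add_assoc]

theorem add_negStr_le_omegaC {N : ℕ} (q : (Fin N → Bool) → ℝ) (x : Fin N → Bool) :
    q x + q (negStr x) ≤ omegaC q :=
  Finset.le_sup' (fun x => q x + q (negStr x)) (Finset.mem_univ x)

theorem gyniWin_le_omegaC {q : (Fin 2 → Bool) → ℝ} (hq : ∀ x, 0 ≤ q x) (B : NSBox 2) :
    gyniWin q B ≤ omegaC q := by
  calc gyniWin q B
      = q ![false, false] * B.winProb ![false, false]
        + q ![false, true] * B.winProb ![false, true] + q ![true, false] * B.winProb ![true, false]
        + q ![true, true] * B.winProb ![true, true] := sum_fin_two_bool _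
    _ ≤ max (q ![false, false] + q ![true, true]) (q ![false, true] + q ![true, false]) :=
        mul_add_mul_add_mul_add_mul_le_max (hq _) (hq _) (hq _) (hq _)
          (B.nonneg _ _) (B.nonneg _ _)
          (B.winProb_add_winProb_le_one (i := 0) rfl (by decide))
          (B.winProb_add_winProb_le_one (i := 1) rfl (by decide))
          (B.winProb_add_winProb_le_one (i := 1) rfl (by decide))
          (B.winProb_add_winProb_le_one (i := 0) rfl (by decide))
    _ ≤ omegaC q := by
        have hff : negStr ![false, false] = ![true, true] := by decide
        have hft : negStr ![false, true] = ![true, false] := by decide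
        exact max_le (hff ▸ add_negStr_le_omegaC q _) (hft ▸ add_negStr_le_omegaC q _)

theorem gyni_two_party_ns_eq_classical_general
    (q : (Fin 2 → Bool) → ℝ) (hq : ∀ x, 0 ≤ q x) :
    IsGreatest {w : ℝ | ∃ B : NSBox 2, w = gyniWin q B} (omegaC q) ∧
      IsGreatest {w : ℝ | ∃ f : Fin 2 → Bool → Bool, w = classWin q f} (omegaC q) := by
  obtain ⟨w, -, hw⟩ := Finset.exists_mem_eq_sup' Finset.univ_nonempty
    (fun x : Fin 2 → Bool => q x + q (negStr x))
  have hclass : ∀ f, classWin q f ≤ omegaC q := fun f =>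
    (classWin_eq_gyniWin_ofStrategy q f).trans_le (gyniWin_le_omegaC hq _)
  have hopt : omegaC q = classWin q (pairStrategy w) :=
    le_antisymm (hw.trans_le (add_le_classWin hq (ne_negStr w) (winsOn_pairStrategy w).1
      (winsOn_pairStrategy w).2)) (hclass _)
  refine ⟨⟨⟨NSBox.ofStrategy (pairStrategy w), ?_⟩, ?_⟩, ⟨pairStrategy w, hopt⟩, ?_⟩
  · rw [hopt, classWin_eq_gyniWin_ofStrategy]
  · rintro _ ⟨B, rfl⟩
    exact gyniWin_le_omegaC hq B
  · rintro _ ⟨f, rfl⟩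
    exact hclass f

/-- For `N = 2` parties, the classical and no-signalling optimal GYNI winning
probabilities coincide for every prior distribution `q`: both equal
`ω_c = max_x (q x + q x̄)`. -/
theorem gyni_two_party_ns_eq_classical
    (q : (Fin 2 → Bool) → ℝ) (hq : ∀ x, 0 ≤ q x) (hsum : ∑ x, q x = 1) :
    IsGreatest {w : ℝ | ∃ B : NSBox 2, w = gyniWin q B} (omegaC q) ∧
      IsGreatest {w : ℝ | ∃ f : Fin 2 → Bool → Bool, w = classWin q f} (omegaC q) :=
  gyni_two_party_ns_eq_classical_general q hq
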